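/- For matrices F_i (i = 1,…,I) indexed over a countable state set, each with nonnegative off-diagonal entries, and a subset J of indices, the principal submatrix satisfies [exp(F_i τ)]_J ≥ exp([F_i]_J τ) ≥ 0 entrywise for all τ ≥ 0, where [M]_J denotes the submatrix with rows and columns in J. -/

import Mathlib

/-!
Adding `c • 1` to a Metzler matrix for large `c` makes it entrywise nonnegative and only
multiplies its exponential by `Real.exp c`, uniformly over all principal submatrices. For a
nonnegative matrix `B` both claims are read off the exponential series: every power `B ^ k`
is nonnegative, and `(B_J) ^ k ≤ (B ^ k)_J` entrywise because the paths through the indices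
of `J` are only some of the paths counted by `B ^ k`.
-/

open NormedSpace Function

namespace Matrix

def IsMetzler {n : Type*} (M : Matrix n n ℝ) : Prop :=
  Pairwise fun i j => 0 ≤ M i j

theorem IsMetzler.submatrix {m n : Type*} {M : Matrix n n ℝ} (hM : M.IsMetzler) {e : m → n}
    (he : Injective e) : (M.submatrix e e).IsMetzler :=
  fun _ _ hij => hM (he.ne hij)

section Nonneg

variable {m n R : Type*} [Fintype m] [DecidableEq m] [Fintype n] [DecidableEq n]
  [Semiring R] [PartialOrder R] [IsOrderedRing R]

theorem submatrix_pow_apply_le {B : Matrix n n R} (hB : ∀ i j, 0 ≤ B i j) {e : m → n}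
    (he : Injective e) (k : ℕ) (i j : m) :
    (B.submatrix e e ^ k) i j ≤ (B ^ k) (e i) (e j) := by
  induction k generalizing j with
  | zero => simp [one_apply, he.eq_iff]
  | succ k ih =>
    rw [pow_succ, pow_succ, mul_apply, mul_apply]
    calc ∑ c, (B.submatrix e e ^ k) i c * B (e c) (e j)
        ≤ ∑ c, (B ^ k) (e i) (e c) * B (e c) (e j) :=
          Finset.sum_le_sum fun c _ => mul_le_mul_of_nonneg_right (ih c) (hB _ _)
      _ = ∑ c ∈ Finset.univ.map ⟨e, he⟩, (B ^ k) (e i) c * B c (e j) := by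
          rw [Finset.sum_map]; rfl
      _ ≤ ∑ c, (B ^ k) (e i) c * B c (e j) :=
          Finset.sum_le_univ_sum_of_nonneg fun c =>
            mul_nonneg (pow_apply_nonneg hB k _ _) (hB _ _)

end Nonneg

section Exp

open scoped Matrix.Norms.Operator Nat

variable {m n : Type*} [Fintype m] [DecidableEq m] [Fintype n] [DecidableEq n]

theorem hasSum_exp_apply (A : Matrix n n ℝ) (i j : n) :
    HasSum (fun k : ℕ => (k !⁻¹ : ℝ) * (A ^ k) i j) (exp A i j) :=
  Pi.hasSum.mp (Pi.hasSum.mp (exp_series_hasSum_exp' (𝕂 := ℝ) A) i) j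

theorem exp_apply_nonneg {B : Matrix n n ℝ} (hB : ∀ i j, 0 ≤ B i j) (i j : n) :
    0 ≤ exp B i j :=
  hasSum_le (fun k => mul_nonneg (by positivity) (pow_apply_nonneg hB k i j)) hasSum_zero
    (hasSum_exp_apply B i j)

theorem exp_submatrix_apply_le {B : Matrix n n ℝ} (hB : ∀ i j, 0 ≤ B i j) {e : m → n}
    (he : Injective e) (i j : m) :
    exp (B.submatrix e e) i j ≤ exp B (e i) (e j) :=
  hasSum_le (fun k => mul_le_mul_of_nonneg_left (submatrix_pow_apply_le hB he k i j)
    (by positivity)) (hasSum_exp_apply _ i j) (hasSum_exp_apply B (e i) (e j))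

theorem exp_sub_smul_one (A : Matrix n n ℝ) (c : ℝ) :
    exp (A - c • 1) = Real.exp (-c) • exp A := by
  have hc : exp ((-c) • (1 : Matrix n n ℝ)) = Real.exp (-c) • 1 := by
    rw [← Algebra.algebraMap_eq_smul_one, ← Algebra.algebraMap_eq_smul_one, Real.exp_eq_exp_ℝ]
    exact (algebraMap_exp_comm (-c)).symm
  rw [sub_eq_add_neg, ← neg_smul, exp_add_of_commute _ _ ((Commute.one_right A).smul_right _), hc,
    mul_smul_comm, mul_one]

theorem IsMetzler.exists_nonneg_add_smul_one {M : Matrix n n ℝ} (hM : M.IsMetzler) :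
    ∃ c : ℝ, ∀ i j, 0 ≤ (M + c • 1) i j := by
  refine ⟨∑ i, |M i i|, fun i j => ?_⟩
  obtain rfl | hij := eq_or_ne i j
  · have hdiag : |M i i| ≤ ∑ i, |M i i| :=
      Finset.single_le_sum (fun i _ => abs_nonneg (M i i)) (Finset.mem_univ i)
    simp only [add_apply, smul_apply, one_apply_eq, smul_eq_mul, mul_one]
    linarith [neg_abs_le (M i i)]
  · simpa [one_apply_ne hij] using hM hij

theorem IsMetzler.exp_apply_nonneg {M : Matrix n n ℝ} (hM : M.IsMetzler) (i j : n) :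
    0 ≤ exp M i j := by
  obtain ⟨c, hc⟩ := hM.exists_nonneg_add_smul_one
  rw [← add_sub_cancel_right M (c • 1), exp_sub_smul_one, smul_apply, smul_eq_mul]
  exact mul_nonneg (Real.exp_nonneg _) (Matrix.exp_apply_nonneg hc i j)

theorem IsMetzler.exp_submatrix_apply_le {M : Matrix n n ℝ} (hM : M.IsMetzler) {e : m → n}
    (he : Injective e) (i j : m) :
    exp (M.submatrix e e) i j ≤ exp M (e i) (e j) := by
  obtain ⟨c, hc⟩ := hM.exists_nonneg_add_smul_one
  have hMe : M.submatrix e e = (M + c • 1).submatrix e e - c • 1 := by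
    rw [← submatrix_one e he]
    exact congrArg (Matrix.submatrix · e e) (add_sub_cancel_right M (c • 1)).symm
  conv_rhs => rw [← add_sub_cancel_right M (c • 1)]
  rw [hMe, exp_sub_smul_one, exp_sub_smul_one, smul_apply, smul_apply, smul_eq_mul, smul_eq_mul]
  exact mul_le_mul_of_nonneg_left (Matrix.exp_submatrix_apply_le hc he i j) (Real.exp_nonneg _)

end Exp

end Matrix

/-- for a Metzler matrix `F` (nonnegative off-diagonal entries) and an
index set `J`, the principal submatrix satisfies
`[exp(F τ)]_J ≥ exp([F]_J τ) ≥ 0` entrywise for all `τ ≥ 0`. -/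
theorem stmt11 {N : ℕ} (F : Matrix (Fin N) (Fin N) ℝ)
    (hMetzler : ∀ i j, i ≠ j → 0 ≤ F i j) (J : Finset (Fin N)) (τ : ℝ) (hτ : 0 ≤ τ) :
    ∀ a b : {j // j ∈ J},
      0 ≤ NormedSpace.exp (τ • F.submatrix (Subtype.val : {j // j ∈ J} → Fin N) Subtype.val) a b ∧
      NormedSpace.exp (τ • F.submatrix (Subtype.val : {j // j ∈ J} → Fin N) Subtype.val) a b ≤
        NormedSpace.exp (τ • F) a.val b.val := by
  have hτF : (τ • F).IsMetzler := fun i j hij => mul_nonneg hτ (hMetzler i j hij)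
  exact fun a b => ⟨(hτF.submatrix Subtype.val_injective).exp_apply_nonneg a b,
    hτF.exp_submatrix_apply_le Subtype.val_injective a b⟩
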